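/- arXiv:2010.07243 — 6 statements merged into one kernel-verified Lean document; each statement's English description precedes it below -/
import Mathlib

section
/- The minimizer of ⟨v, x⟩ over the L1-ball B_1(τ) is unique if and only if the entries of |x| attain their maximum at a unique coordinate. -/
/-- Lower bound: for any `v` in the L1-ball, `⟨v,x⟩ ≥ -τ‖x‖∞`. -/
lemma l1_lmo_lb {n : ℕ} (τ : ℝ) (x v : Fin n → ℝ) (i : Fin n)
    (hmax : ∀ j, |x j| ≤ |x i|) (hv : (∑ k, |v k|) ≤ τ) :
    -(τ * |x i|) ≤ ∑ k, v k * x k := by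
  have h1 : ∀ k ∈ Finset.univ, -(|v k| * |x i|) ≤ v k * x k := by
    intro k _
    have : |v k * x k| ≤ |v k| * |x i| := by
      rw [abs_mul]
      exact mul_le_mul_of_nonneg_left (hmax k) (abs_nonneg _)
    linarith [neg_abs_le (v k * x k)]
  calc -(τ * |x i|) ≤ -((∑ k, |v k|) * |x i|) := by
        have := mul_le_mul_of_nonneg_right hv (abs_nonneg (x i)); linarith
    _ = ∑ k, -(|v k| * |x i|) := by rw [Finset.sum_mul, ← Finset.sum_neg_distrib]
    _ ≤ ∑ k, v k * x k := Finset.sum_le_sum h1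

/-- The canonical minimizer at an argmax coordinate. -/
lemma l1_lmo_min {n : ℕ} (τ : ℝ) (hτ : 0 < τ) (x : Fin n → ℝ) (i : Fin n)
    (hmax : ∀ j, |x j| ≤ |x i|) (hxi : x i ≠ 0) :
    let s : ℝ := if 0 < x i then -τ else τ
    let v : Fin n → ℝ := fun k => if k = i then s else 0
    (∑ k, |v k|) = τ ∧ (∑ k, v k * x k) = -(τ * |x i|) := by
  intro s v
  have hs : |s| = τ := by
    simp only [s]; split <;> simp [abs_of_pos hτ, abs_of_neg, hτ, abs_neg]
  have hsx : s * x i = -(τ * |x i|) := by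
    simp only [s]
    rcases lt_trichotomy (x i) 0 with h | h | h
    · rw [if_neg (by linarith), abs_of_neg h]; ring
    · exact absurd h hxi
    · rw [if_pos h, abs_of_pos h]; ring
  constructor
  · rw [Finset.sum_eq_single_of_mem i (Finset.mem_univ i)]
    · simp [v, hs]
    · intro b _ hb; simp [v, hb]
  · rw [Finset.sum_eq_single_of_mem i (Finset.mem_univ i)]
    · simp [v, hsx]
    · intro b _ hb; simp [v, hb]

/-- The minimizer of ⟨v, x⟩ over the L1-ball B_1(τ) is unique if and only if the entries
of |x| attain their maximum at a unique coordinate. -/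
theorem l1_lmo_unique_iff {n : ℕ} (τ : ℝ) (hτ : 0 < τ) (x : Fin n → ℝ) (hx : x ≠ 0) :
    (∃! v : Fin n → ℝ, (∑ i, |v i|) ≤ τ ∧
        ∀ w : Fin n → ℝ, (∑ i, |w i|) ≤ τ → ∑ i, v i * x i ≤ ∑ i, w i * x i) ↔
    (∃! i : Fin n, ∀ j, |x j| ≤ |x i|) := by
  -- some nonzero coordinate
  obtain ⟨k0, hk0⟩ : ∃ k, x k ≠ 0 := by
    by_contra h; push_neg at h; exact hx (funext h)
  have hn : Nonempty (Fin n) := ⟨k0⟩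
  -- an argmax exists
  obtain ⟨i0, -, hi0⟩ := Finset.exists_max_image Finset.univ (fun j => |x j|)
    ⟨k0, Finset.mem_univ k0⟩
  have hi0' : ∀ j, |x j| ≤ |x i0| := fun j => hi0 j (Finset.mem_univ j)
  -- any argmax coordinate has positive |x i|, in particular x i ≠ 0
  have hpos : ∀ i : Fin n, (∀ j, |x j| ≤ |x i|) → 0 < |x i| := by
    intro i hi
    exact lt_of_lt_of_le (abs_pos.mpr hk0) (hi k0)
  constructor
  · rintro ⟨v, -, hvu⟩
    refine ⟨i0, hi0', ?_⟩
    intro j hj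
    by_contra hji
    -- two distinct minimizers
    have hxj : x j ≠ 0 := abs_ne_zero.mp (ne_of_gt (hpos j hj))
    have hxi0 : x i0 ≠ 0 := abs_ne_zero.mp (ne_of_gt (hpos i0 hi0'))
    obtain ⟨hj1, hj2⟩ := l1_lmo_min τ hτ x j hj hxj
    obtain ⟨hi1, hi2⟩ := l1_lmo_min τ hτ x i0 hi0' hxi0
    set sj : ℝ := if 0 < x j then -τ else τ with hsj
    set si : ℝ := if 0 < x i0 then -τ else τ with hsi
    set vj : Fin n → ℝ := fun k => if k = j then sj else 0 with hvj
    set vi : Fin n → ℝ := fun k => if k = i0 then si else 0 with hvi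
    have hmj : (∑ k, |vj k|) ≤ τ ∧ ∀ w : Fin n → ℝ, (∑ k, |w k|) ≤ τ →
        (∑ k, vj k * x k) ≤ ∑ k, w k * x k := by
      refine ⟨le_of_eq hj1, fun w hw => ?_⟩
      rw [hj2]; exact l1_lmo_lb τ x w j hj hw
    have hmi : (∑ k, |vi k|) ≤ τ ∧ ∀ w : Fin n → ℝ, (∑ k, |w k|) ≤ τ →
        (∑ k, vi k * x k) ≤ ∑ k, w k * x k := by
      refine ⟨le_of_eq hi1, fun w hw => ?_⟩
      rw [hi2]; exact l1_lmo_lb τ x w i0 hi0' hw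
    have heq : vj = vi := (hvu vj hmj).trans (hvu vi hmi).symm
    have : vj j = vi j := congrFun heq j
    have hsjne : sj ≠ 0 := by
      rw [hsj]; split <;> [exact neg_ne_zero.mpr (ne_of_gt hτ); exact ne_of_gt hτ]
    simp only [hvj, hvi, if_pos rfl, if_neg hji] at this
    exact hsjne this
  · rintro ⟨i, hi, hiu⟩
    have hxi : x i ≠ 0 := abs_ne_zero.mp (ne_of_gt (hpos i hi))
    obtain ⟨h1, h2⟩ := l1_lmo_min τ hτ x i hi hxi
    set s : ℝ := if 0 < x i then -τ else τ with hs
    set v0 : Fin n → ℝ := fun k => if k = i then s else 0 with hv0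
    refine ⟨v0, ⟨le_of_eq h1, fun w hw => by rw [h2]; exact l1_lmo_lb τ x w i hi hw⟩, ?_⟩
    -- uniqueness of the minimizer
    rintro v ⟨hv1, hv2⟩
    -- v achieves the min value
    have hvmin : (∑ k, v k * x k) = -(τ * |x i|) := by
      have := hv2 v0 (le_of_eq h1)
      rw [h2] at this
      exact le_antisymm this (l1_lmo_lb τ x v i hi hv1)
    -- chain of inequalities is tight
    have hA : ∀ k ∈ Finset.univ, -(|v k| * |x k|) ≤ v k * x k := by
      intro k _
      have : |v k * x k| = |v k| * |x k| := abs_mul _ _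
      linarith [neg_abs_le (v k * x k)]
    have hB : ∀ k ∈ Finset.univ, |v k| * |x k| ≤ |v k| * |x i| := fun k _ =>
      mul_le_mul_of_nonneg_left (hi k) (abs_nonneg _)
    have e1 : -(∑ k, |v k| * |x k|) ≤ ∑ k, v k * x k := by
      rw [← Finset.sum_neg_distrib]; exact Finset.sum_le_sum hA
    have e2 : (∑ k, |v k| * |x k|) ≤ (∑ k, |v k|) * |x i| := by
      rw [Finset.sum_mul]; exact Finset.sum_le_sum hB
    have e3 : (∑ k, |v k|) * |x i| ≤ τ * |x i| :=
      mul_le_mul_of_nonneg_right hv1 (abs_nonneg _)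
    -- hence all are equalities
    have eq2 : (∑ k, |v k| * |x k|) = (∑ k, |v k|) * |x i| := by
      rw [hvmin] at e1; linarith
    have eq3 : (∑ k, |v k|) * |x i| = τ * |x i| := by
      rw [hvmin] at e1; linarith
    have eqS : (∑ k, |v k|) = τ :=
      mul_right_cancel₀ (ne_of_gt (hpos i hi)) eq3
    -- off-argmax coordinates vanish
    have hzero : ∀ k, k ≠ i → v k = 0 := by
      intro k hk
      have hklt : |x k| < |x i| := by
        rcases lt_or_eq_of_le (hi k) with h | h
        · exact h
        · exfalso; exact hk (hiu k (fun j => h ▸ hi j))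
      have hterm : ∀ m ∈ Finset.univ, (0:ℝ) ≤ |v m| * (|x i| - |x m|) := fun m _ =>
        mul_nonneg (abs_nonneg _) (by linarith [hi m])
      have hsum0 : (∑ m, |v m| * (|x i| - |x m|)) = 0 := by
        have : (∑ m, |v m| * (|x i| - |x m|)) =
            (∑ m, |v m|) * |x i| - ∑ m, |v m| * |x m| := by
          rw [Finset.sum_mul, ← Finset.sum_sub_distrib]
          congr 1; ext m; ring
        rw [this, eq2]; ring
      have := (Finset.sum_eq_zero_iff_of_nonneg hterm).mp hsum0 k (Finset.mem_univ k)
      have : |v k| = 0 := by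
        rcases mul_eq_zero.mp this with h | h
        · exact h
        · exfalso; linarith
      exact abs_eq_zero.mp this
    -- v i is determined
    have hvsum : (∑ k, v k * x k) = v i * x i := by
      rw [Finset.sum_eq_single_of_mem i (Finset.mem_univ i)]
      intro b _ hb; rw [hzero b hb]; ring
    have hvix : v i * x i = -(τ * |x i|) := hvsum ▸ hvmin
    have hsx : s * x i = -(τ * |x i|) := by
      simp only [hs]
      rcases lt_trichotomy (x i) 0 with h | h | h
      · rw [if_neg (by linarith), abs_of_neg h]; ring
      · exact absurd h hxi
      · rw [if_pos h, abs_of_pos h]; ring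
    have hvi : v i = s := mul_right_cancel₀ hxi (hvix.trans hsx.symm)
    funext k
    by_cases hk : k = i
    · subst hk; simp [hv0, hvi]
    · simp [hv0, hk, hzero k hk]
end

section
/- For K ∈ {1,...,n}, the intersection of the L1-ball B_1(τK) and the hypercube B_∞(τ) equals the convex hull of the set of vectors in R^n with exactly K nonzero entries, each equal to ±τ. -/
/-!
Both sides are closed and convex, so it suffices that every linear functional `f` is bounded on
the polytope by its maximum over the sign vectors. Write `f x = ∑ cᵢ xᵢ` and choose a `K`-set `s`
maximizing `∑_{i ∈ s} |cᵢ|`; exchanging one index shows that `s` carries the `K` largest `|cᵢ|`.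
The vector equal to `±τ` on `s`, with the signs of `c`, and to `0` elsewhere gives `f` the value
`τ ∑_{i ∈ s} |cᵢ|`, and this bounds `∑ |cᵢ| |xᵢ|` on the polytope: the mass of `|x|` outside `s`
has weight at most `min_{i ∈ s} |cᵢ|` and fits into the room `∑_{i ∈ s} (τ - |xᵢ|)` inside `s`.
-/

open Finset

theorem convexOn_abs_apply {ι : Type*} (i : ι) : ConvexOn ℝ Set.univ fun x : ι → ℝ => |x i| := by
  simpa [Function.comp_def] using
    convexOn_univ_norm.comp_linearMap (LinearMap.proj i : (ι → ℝ) →ₗ[ℝ] ℝ)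

def sparsePolytope (ι : Type*) [Fintype ι] (K : ℕ) (τ : ℝ) : Set (ι → ℝ) :=
  {x | ∑ i, |x i| ≤ τ * K ∧ ∀ i, |x i| ≤ τ}

def sparseSignVectors (ι : Type*) [Fintype ι] (K : ℕ) (τ : ℝ) : Set (ι → ℝ) :=
  {x | (univ.filter fun i => x i ≠ 0).card = K ∧ ∀ i, x i ≠ 0 → x i = τ ∨ x i = -τ}

variable {ι : Type*} [Fintype ι]

theorem convexOn_sum_abs : ConvexOn ℝ Set.univ fun x : ι → ℝ => ∑ i, |x i| := by
  simpa [Function.comp_def, PiLp.norm_eq_of_L1] using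
    convexOn_univ_norm.comp_linearMap (WithLp.linearEquiv 1 ℝ (ι → ℝ)).symm.toLinearMap

theorem convex_sparsePolytope (K : ℕ) (τ : ℝ) : Convex ℝ (sparsePolytope ι K τ) := by
  have h := (convexOn_sum_abs.convex_le (τ * K)).inter
    (convex_iInter fun i => (convexOn_abs_apply (ι := ι) i).convex_le τ)
  convert h using 1
  ext x
  simp [sparsePolytope]

theorem sparseSignVectors_subset_sparsePolytope {K : ℕ} {τ : ℝ} (hτ : 0 ≤ τ) :
    sparseSignVectors ι K τ ⊆ sparsePolytope ι K τ := by
  rintro v ⟨hcard, hv⟩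
  have habs i : |v i| = if v i ≠ 0 then τ else 0 := by
    split_ifs with h
    · rcases hv i h with h' | h' <;> simp [h', abs_of_nonneg hτ]
    · simp [not_not.1 h]
  refine ⟨?_, fun i => ?_⟩
  · rw [sum_congr rfl fun i _ => habs i, ← sum_filter, sum_const, hcard, nsmul_eq_mul,
      mul_comm]
  · rw [habs i]; split_ifs <;> simp [hτ]

theorem finite_sparseSignVectors (K : ℕ) (τ : ℝ) : (sparseSignVectors ι K τ).Finite := by
  refine (Set.Finite.pi (t := fun _ => ({0, τ, -τ} : Set ℝ)) fun _ => by simp).subset ?_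
  rintro v ⟨-, hv⟩ i -
  by_cases h : v i = 0
  · simp [h]
  · rcases hv i h with h' | h' <;> simp [h']

theorem exists_card_eq_forall_notMem_le_forall_mem {β : Type*} [AddCommGroup β] [LinearOrder β]
    [IsOrderedAddMonoid β] (w : ι → β) {k : ℕ} (hk : k ≤ Fintype.card ι) :
    ∃ s : Finset ι, #s = k ∧ ∀ i ∈ s, ∀ j ∉ s, w j ≤ w i := by
  classical
  obtain ⟨s, hs, hmax⟩ := (powersetCard k univ).exists_max_image (fun s => ∑ i ∈ s, w i)
    (powersetCard_nonempty.2 (by simpa using hk))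
  rw [mem_powersetCard] at hs
  refine ⟨s, hs.2, fun i hi j hj => ?_⟩
  have hj' : j ∉ s.erase i := fun h => hj (mem_of_mem_erase h)
  have hswap := hmax (insert j (s.erase i)) (mem_powersetCard.2 ⟨subset_univ _, by
    rw [card_insert_of_notMem hj', card_erase_of_mem hi,
      Nat.sub_add_cancel (card_pos.2 ⟨i, hi⟩), hs.2]⟩)
  rw [sum_insert hj', sum_erase_eq_sub hi, ← sub_nonpos] at hswap
  rw [← sub_nonpos]
  convert hswap using 1
  abel

theorem sum_mul_le_mul_sum_of_forall_notMem_le_forall_mem {s : Finset ι} {w y : ι → ℝ} {τ : ℝ}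
    (hw : ∀ i, 0 ≤ w i) (hy₀ : ∀ i, 0 ≤ y i) (hyτ : ∀ i, y i ≤ τ) (hsum : ∑ i, y i ≤ τ * #s)
    (hs : ∀ i ∈ s, ∀ j ∉ s, w j ≤ w i) :
    ∑ i, w i * y i ≤ τ * ∑ i ∈ s, w i := by
  classical
  obtain ⟨m, hm₀, hm_compl, hm_mem⟩ :
      ∃ m, 0 ≤ m ∧ (∀ j ∈ sᶜ, w j ≤ m) ∧ ∀ i ∈ s, m ≤ w i := by
    rcases sᶜ.eq_empty_or_nonempty with h | h
    · exact ⟨0, le_rfl, by simp [h], fun i _ => hw i⟩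
    · obtain ⟨j, hj⟩ := h
      exact ⟨sᶜ.sup' ⟨j, hj⟩ w, (hw j).trans (le_sup' w hj), fun j hj => le_sup' w hj,
        fun i hi => sup'_le _ _ fun j hj => hs i hi j (mem_compl.1 hj)⟩
  have hslack : ∑ j ∈ sᶜ, y j ≤ ∑ i ∈ s, (τ - y i) := by
    rw [sum_sub_distrib, sum_const, nsmul_eq_mul, ← sum_add_sum_compl s y] at *
    linarith
  calc ∑ i, w i * y i = ∑ i ∈ s, w i * y i + ∑ j ∈ sᶜ, w j * y j := (sum_add_sum_compl s _).symm
    _ ≤ ∑ i ∈ s, w i * y i + ∑ j ∈ sᶜ, m * y j := by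
      gcongr with j hj
      exacts [hy₀ j, hm_compl j hj]
    _ ≤ ∑ i ∈ s, w i * y i + ∑ i ∈ s, m * (τ - y i) := by
      rw [← mul_sum, ← mul_sum]
      gcongr
    _ ≤ ∑ i ∈ s, w i * y i + ∑ i ∈ s, w i * (τ - y i) := by
      gcongr with i hi
      exacts [sub_nonneg.2 (hyτ i), hm_mem i hi]
    _ = τ * ∑ i ∈ s, w i := by
      rw [← sum_add_distrib, mul_sum]
      exact sum_congr rfl fun i _ => by ring

theorem exists_mem_sparseSignVectors_le {K : ℕ} (hK : K ≤ Fintype.card ι) {τ : ℝ} (hτ : 0 < τ)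
    {x : ι → ℝ} (hx : x ∈ sparsePolytope ι K τ) (f : (ι → ℝ) →ₗ[ℝ] ℝ) :
    ∃ v ∈ sparseSignVectors ι K τ, f x ≤ f v := by
  classical
  set c : ι → ℝ := fun i => f fun j => if i = j then 1 else 0
  have hf (z : ι → ℝ) : f z = ∑ i, z i * c i := f.pi_apply_eq_sum_univ z
  obtain ⟨s, hsK, hs⟩ := exists_card_eq_forall_notMem_le_forall_mem (fun i => |c i|) hK
  set v : ι → ℝ := fun i => if i ∈ s then (if 0 ≤ c i then τ else -τ) else 0
  have hv_ne (i : ι) : v i ≠ 0 ↔ i ∈ s := by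
    simp only [v]
    split_ifs with hi <;> simp [hi, hτ.ne']
  have hv_mul (i : ι) : v i * c i = if i ∈ s then τ * |c i| else 0 := by
    by_cases hi : i ∈ s <;> simp only [v, hi, if_true, if_false, zero_mul]
    split_ifs with h
    · rw [abs_of_nonneg h]
    · rw [abs_of_neg (not_le.1 h)]; ring
  refine ⟨v, ⟨?_, fun i hi => ?_⟩, ?_⟩
  · rw [← hsK]; congr 1; ext i; simp [hv_ne]
  · have hi' := (hv_ne i).1 hi
    simp only [v, hi', if_true]
    split_ifs <;> simp
  · calc f x = ∑ i, x i * c i := hf x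
      _ ≤ ∑ i, |c i| * |x i| := sum_le_sum fun i _ => by
        rw [mul_comm, ← abs_mul]; exact le_abs_self _
      _ ≤ τ * ∑ i ∈ s, |c i| :=
        sum_mul_le_mul_sum_of_forall_notMem_le_forall_mem (fun i => abs_nonneg _)
          (fun i => abs_nonneg _) hx.2 (hsK ▸ hx.1) hs
      _ = f v := by rw [hf, sum_congr rfl fun i _ => hv_mul i, sum_ite_mem, univ_inter, mul_sum]

theorem sparsePolytope_eq_convexHull {K : ℕ} (hK : K ≤ Fintype.card ι) {τ : ℝ} (hτ : 0 < τ) :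
    sparsePolytope ι K τ = convexHull ℝ (sparseSignVectors ι K τ) := by
  refine Set.Subset.antisymm (fun x hx => ?_)
    (convexHull_min (sparseSignVectors_subset_sparsePolytope hτ.le) (convex_sparsePolytope K τ))
  rw [← iInter_halfSpaces_eq (convex_convexHull ℝ (sparseSignVectors ι K τ))
    ((finite_sparseSignVectors K τ).isClosed_convexHull (𝕜 := ℝ))]
  refine Set.mem_iInter.2 fun l => ?_
  obtain ⟨v, hv, hle⟩ := exists_mem_sparseSignVectors_le hK hτ hx l.toLinearMap
  exact ⟨v, subset_convexHull ℝ _ hv, hle⟩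

theorem k_sparse_polytope_eq_general {n K : ℕ} (hKn : K ≤ n) (τ : ℝ) (hτ : 0 < τ) :
    {x : Fin n → ℝ | (∑ i, |x i|) ≤ τ * K ∧ ∀ i, |x i| ≤ τ} =
      convexHull ℝ {x : Fin n → ℝ |
        (Finset.univ.filter fun i => x i ≠ 0).card = K ∧
        ∀ i, x i ≠ 0 → (x i = τ ∨ x i = -τ)} :=
  sparsePolytope_eq_convexHull (by simpa using hKn) hτ

/-- For K ∈ {1,...,n}, the intersection of the L1-ball B_1(τK) and the hypercube B_∞(τ)
equals the convex hull of the set of vectors in R^n with exactly K nonzero entries, each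
equal to ±τ (the K-sparse polytope of radius τ). -/
theorem k_sparse_polytope_eq {n K : ℕ} (hK1 : 1 ≤ K) (hKn : K ≤ n) (τ : ℝ) (hτ : 0 < τ) :
    {x : Fin n → ℝ | (∑ i, |x i|) ≤ τ * K ∧ ∀ i, |x i| ≤ τ} =
      convexHull ℝ {x : Fin n → ℝ |
        (Finset.univ.filter fun i => x i ≠ 0).card = K ∧
        ∀ i, x i ≠ 0 → (x i = τ ∨ x i = -τ)} :=
  k_sparse_polytope_eq_general hKn τ hτ
end

section
/- The map x ↦ (sum of the K largest absolute entries of x) defines a norm on R^n, for any fixed K ∈ {1,...,n}. -/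
/-! Each sum `∑ i ∈ S, |x i|` over a `K`-subset `S` is a seminorm of `x`, and `kNorm` is their
supremum, so it is nonnegative, absolutely homogeneous and subadditive. When `1 ≤ K ≤ n`, every
coordinate lies in some `K`-subset, so `|x i| ≤ kNorm n K x`, which gives definiteness. -/

/-- The K-norm of x ∈ R^n: the sum of the K largest values among |x_1|, ..., |x_n|,
expressed as the maximum over all coordinate subsets of size K of the sum of |x_i|. -/
noncomputable def kNorm (n K : ℕ) (x : Fin n → ℝ) : ℝ :=
  sSup {s : ℝ | ∃ S : Finset (Fin n), S.card = K ∧ s = ∑ i ∈ S, |x i|}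

open scoped Pointwise

namespace kNorm

variable {n K : ℕ}

theorem sum_abs_le (x : Fin n → ℝ) {S : Finset (Fin n)} (hS : S.card = K) :
    ∑ i ∈ S, |x i| ≤ kNorm n K x := by
  refine le_csSup ?_ ⟨S, hS, rfl⟩
  refine ((Set.finite_range fun S : Finset (Fin n) ↦ ∑ i ∈ S, |x i|).subset ?_).bddAbove
  rintro _ ⟨S, -, rfl⟩
  exact ⟨S, rfl⟩

theorem nonneg (x : Fin n → ℝ) : 0 ≤ kNorm n K x :=
  Real.sSup_nonneg fun _ ⟨_, _, hs⟩ ↦ hs ▸ Finset.sum_nonneg fun i _ ↦ abs_nonneg (x i)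

theorem zero : kNorm n K 0 = 0 :=
  le_antisymm (Real.sSup_nonpos fun _ ⟨_, _, hs⟩ ↦ by simp [hs]) (nonneg 0)

theorem abs_apply_le (hK1 : 1 ≤ K) (hKn : K ≤ n) (x : Fin n → ℝ) (i : Fin n) :
    |x i| ≤ kNorm n K x := by
  obtain ⟨S, hiS, -, hS⟩ := Finset.exists_subsuperset_card_eq
    (Finset.subset_univ {i}) (by simpa using hK1) (by simpa using hKn)
  calc |x i| ≤ ∑ j ∈ S, |x j| :=
        Finset.single_le_sum (fun j _ ↦ abs_nonneg (x j)) (hiS (Finset.mem_singleton_self i))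
    _ ≤ kNorm n K x := sum_abs_le x hS

theorem eq_zero_iff (hK1 : 1 ≤ K) (hKn : K ≤ n) (x : Fin n → ℝ) :
    kNorm n K x = 0 ↔ x = 0 := by
  refine ⟨fun h ↦ funext fun i ↦ ?_, fun h ↦ h ▸ zero⟩
  simpa [h] using abs_apply_le hK1 hKn x i

theorem smul (a : ℝ) (x : Fin n → ℝ) : kNorm n K (a • x) = |a| * kNorm n K x := by
  have hsums : {s : ℝ | ∃ S : Finset (Fin n), S.card = K ∧ s = ∑ i ∈ S, |(a • x) i|} =
      |a| • {s : ℝ | ∃ S : Finset (Fin n), S.card = K ∧ s = ∑ i ∈ S, |x i|} := by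
    ext s
    simp only [Pi.smul_apply, smul_eq_mul, abs_mul, ← Finset.mul_sum, Set.mem_ofPred_eq,
      Set.mem_smul_set]
    constructor
    · rintro ⟨S, hS, rfl⟩
      exact ⟨_, ⟨S, hS, rfl⟩, rfl⟩
    · rintro ⟨_, ⟨S, hS, rfl⟩, rfl⟩
      exact ⟨S, hS, rfl⟩
  rw [kNorm, hsums, Real.sSup_smul_of_nonneg (abs_nonneg a)]
  rfl

theorem add_le (x y : Fin n → ℝ) : kNorm n K (x + y) ≤ kNorm n K x + kNorm n K y := by
  refine Real.sSup_le ?_ (add_nonneg (nonneg x) (nonneg y))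
  rintro _ ⟨S, hS, rfl⟩
  calc ∑ i ∈ S, |(x + y) i| ≤ ∑ i ∈ S, (|x i| + |y i|) :=
        Finset.sum_le_sum fun i _ ↦ abs_add_le (x i) (y i)
    _ = ∑ i ∈ S, |x i| + ∑ i ∈ S, |y i| := Finset.sum_add_distrib
    _ ≤ kNorm n K x + kNorm n K y := add_le_add (sum_abs_le x hS) (sum_abs_le y hS)

end kNorm

/-- The map x ↦ (sum of the K largest absolute entries of x) defines a norm on R^n,
for any fixed K ∈ {1,...,n}: it is nonnegative, vanishes exactly at 0, is absolutely
homogeneous, and satisfies the triangle inequality. -/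
theorem kNorm_is_norm {n K : ℕ} (hK1 : 1 ≤ K) (hKn : K ≤ n) :
    (∀ x : Fin n → ℝ, 0 ≤ kNorm n K x) ∧
    (∀ x : Fin n → ℝ, kNorm n K x = 0 ↔ x = 0) ∧
    (∀ (a : ℝ) (x : Fin n → ℝ), kNorm n K (a • x) = |a| * kNorm n K x) ∧
    (∀ x y : Fin n → ℝ, kNorm n K (x + y) ≤ kNorm n K x + kNorm n K y) :=
  ⟨kNorm.nonneg, kNorm.eq_zero_iff hK1 hKn, kNorm.smul, kNorm.add_le⟩
end

section
/- The unit ball of the K-norm scaled by τ (i.e., {x : sum of K largest absolute entries of x ≤ τ}) equals the convex hull of the union of the L1-ball B_1(τ) and the hypercube B_∞(τ/K). -/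
/-!
For `⊇`: the K-norm ball is an intersection of the convex sets `{x | ∑ i ∈ S, |x i| ≤ τ}`,
`#S = K`, and it contains both balls. For `⊆`: if `t` is the K-th largest `|x i|`, then
`K t + ∑ i, (|x i| - t)₊ = ‖x‖_K ≤ τ`. Clipping `x` to `[-t, t]` splits it as `x = s + c` with
`‖c‖_∞ ≤ t` and `‖s‖₁ = ∑ i, (|x i| - t)₊ ≤ τ - K t`, so `x` is the convex combination, with
weights `(τ - K t) / τ` and `K t / τ`, of a point of `B₁(τ)` and a point of `B_∞(τ / K)`.
-/

open Finset
open scoped Pointwise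

theorem abs_max_neg_min_le {t : ℝ} (ht : 0 ≤ t) (a : ℝ) : |max (-t) (min a t)| ≤ t :=
  abs_le.2 ⟨le_max_left _ _, max_le (by linarith) (min_le_right _ _)⟩

theorem abs_sub_max_neg_min {t : ℝ} (ht : 0 ≤ t) (a : ℝ) :
    |a - max (-t) (min a t)| = max (|a| - t) 0 := by
  rcases le_total a (-t) with h | h
  · rw [min_eq_left (by linarith), max_eq_left h, abs_of_nonpos (by linarith),
      abs_of_nonpos (by linarith), max_eq_left (by linarith)]
    ring
  rcases le_total a t with h' | h'
  · rw [min_eq_left h', max_eq_right h, sub_self, abs_zero,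
      max_eq_right (sub_nonpos.2 (abs_le.2 ⟨h, h'⟩))]
  · rw [min_eq_right h', max_eq_right (by linarith), abs_of_nonneg (by linarith),
      abs_of_nonneg (by linarith), max_eq_left (by linarith)]

theorem convex_setOf_sum_abs_le {ι : Type*} (S : Finset ι) (τ : ℝ) :
    Convex ℝ {x : ι → ℝ | ∑ i ∈ S, |x i| ≤ τ} := by
  intro x hx y hy a b ha hb hab
  calc ∑ i ∈ S, |a * x i + b * y i|
      ≤ ∑ i ∈ S, (a * |x i| + b * |y i|) := by
        gcongr with i
        exact (abs_add_le _ _).trans_eq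
          (by rw [abs_mul, abs_mul, abs_of_nonneg ha, abs_of_nonneg hb])
    _ = a * ∑ i ∈ S, |x i| + b * ∑ i ∈ S, |y i| := by
        rw [sum_add_distrib, mul_sum, mul_sum]
    _ ≤ a * τ + b * τ := by gcongr <;> assumption
    _ = τ := by rw [← add_mul, hab, one_mul]

theorem mem_smul_setOf_sum_abs_le {ι : Type*} [Fintype ι] {a τ : ℝ} (ha : 0 ≤ a) (hτ : 0 ≤ τ)
    {x : ι → ℝ} (hx : ∑ i, |x i| ≤ a * τ) : x ∈ a • {y : ι → ℝ | ∑ i, |y i| ≤ τ} := by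
  rcases ha.eq_or_lt with rfl | ha
  · have : x = 0 := funext fun i => abs_nonpos_iff.1 <|
      (single_le_sum (fun j _ => abs_nonneg (x j)) (mem_univ i)).trans (by simpa using hx)
    exact this ▸ Set.zero_mem_smul_set (by simpa using hτ)
  · rw [Set.mem_smul_set_iff_inv_smul_mem₀ ha.ne', Set.mem_ofPred_eq]
    simp only [Pi.smul_apply, smul_eq_mul, abs_mul, abs_inv, abs_of_pos ha, ← mul_sum]
    exact (inv_mul_le_iff₀ ha).2 hx

theorem mem_smul_setOf_forall_abs_le {ι : Type*} {a r : ℝ} (ha : 0 ≤ a) (hr : 0 ≤ r)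
    {x : ι → ℝ} (hx : ∀ i, |x i| ≤ a * r) : x ∈ a • {y : ι → ℝ | ∀ i, |y i| ≤ r} := by
  rcases ha.eq_or_lt with rfl | ha
  · have : x = 0 := funext fun i => abs_nonpos_iff.1 (by simpa using hx i)
    exact this ▸ Set.zero_mem_smul_set fun i => by simpa using hr
  · rw [Set.mem_smul_set_iff_inv_smul_mem₀ ha.ne']
    intro i
    simp only [Pi.smul_apply, smul_eq_mul, abs_mul, abs_inv, abs_of_pos ha]
    exact (inv_mul_le_iff₀ ha).2 (hx i)

theorem apply_le_of_forall_sum_powersetCard_le {ι : Type*} [Fintype ι] [DecidableEq ι] {K : ℕ}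
    {f : ι → ℝ} {S : Finset ι} (hS : S.card = K)
    (hmax : ∀ T ∈ univ.powersetCard K, ∑ i ∈ T, f i ≤ ∑ i ∈ S, f i)
    {i j : ι} (hi : i ∉ S) (hj : j ∈ S) : f i ≤ f j := by
  have hi' : i ∉ S.erase j := fun h => hi (mem_of_mem_erase h)
  have hT : insert i (S.erase j) ∈ univ.powersetCard K := by
    rw [mem_powersetCard_univ, card_insert_of_notMem hi', card_erase_of_mem hj, hS]
    have : 0 < K := hS ▸ card_pos.2 ⟨j, hj⟩
    omega
  have := hmax _ hT
  rw [sum_insert hi', sum_erase_eq_sub hj] at this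
  linarith

theorem sum_abs_le_kNorm {n K : ℕ} (x : Fin n → ℝ) {S : Finset (Fin n)} (hS : S.card = K) :
    ∑ i ∈ S, |x i| ≤ kNorm n K x :=
  le_csSup ((Set.finite_range fun S : Finset (Fin n) => ∑ i ∈ S, |x i|).subset
    (by rintro _ ⟨S, -, rfl⟩; exact ⟨S, rfl⟩)).bddAbove ⟨S, hS, rfl⟩

theorem kNorm_le_iff {n K : ℕ} (hKn : K ≤ n) (x : Fin n → ℝ) (τ : ℝ) :
    kNorm n K x ≤ τ ↔ ∀ S : Finset (Fin n), S.card = K → ∑ i ∈ S, |x i| ≤ τ := by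
  refine ⟨fun h S hS => (sum_abs_le_kNorm x hS).trans h, fun h => csSup_le ?_ ?_⟩
  · obtain ⟨S, -, hS⟩ := exists_subset_card_eq (s := (univ : Finset (Fin n))) (by simpa using hKn)
    exact ⟨_, S, hS, rfl⟩
  · rintro _ ⟨S, hS, rfl⟩
    exact h S hS

theorem convex_setOf_kNorm_le {n K : ℕ} (hKn : K ≤ n) (τ : ℝ) :
    Convex ℝ {x : Fin n → ℝ | kNorm n K x ≤ τ} := by
  have : {x : Fin n → ℝ | kNorm n K x ≤ τ} =
      ⋂ (S : Finset (Fin n)) (_ : S.card = K), {x | ∑ i ∈ S, |x i| ≤ τ} := by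
    ext x
    simp [kNorm_le_iff hKn]
  rw [this]
  exact convex_iInter₂ fun S _ => convex_setOf_sum_abs_le S τ

theorem exists_threshold_le_kNorm {n K : ℕ} (hK1 : 1 ≤ K) (hKn : K ≤ n) (x : Fin n → ℝ) :
    ∃ t, 0 ≤ t ∧ K * t + ∑ i, max (|x i| - t) 0 ≤ kNorm n K x := by
  obtain ⟨S₀, hS₀, hmax⟩ := (univ.powersetCard K).exists_max_image (fun S => ∑ i ∈ S, |x i|)
    (powersetCard_nonempty.2 (by simpa using hKn))
  rw [mem_powersetCard_univ] at hS₀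
  obtain ⟨j, hj, hmin⟩ := S₀.exists_min_image (fun i => |x i|) (card_pos.1 (by omega))
  refine ⟨|x j|, abs_nonneg _, ?_⟩
  have hout : ∀ i ∈ univ, i ∉ S₀ → max (|x i| - |x j|) 0 = 0 := fun i _ hi =>
    max_eq_right (sub_nonpos.2 (apply_le_of_forall_sum_powersetCard_le hS₀ hmax hi hj))
  rw [← sum_subset (subset_univ S₀) hout,
    sum_congr rfl fun i hi => max_eq_left (sub_nonneg.2 (hmin i hi)),
    sum_sub_distrib, sum_const, hS₀, nsmul_eq_mul, add_sub_cancel]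
  exact sum_abs_le_kNorm x hS₀

theorem mem_convexHull_union_of_threshold {n K : ℕ} (hK : 0 < K) {τ : ℝ} (hτ : 0 < τ)
    {x : Fin n → ℝ} {t : ℝ} (ht : 0 ≤ t) (hx : K * t + ∑ i, max (|x i| - t) 0 ≤ τ) :
    x ∈ convexHull ℝ ({x : Fin n → ℝ | (∑ i, |x i|) ≤ τ} ∪
        {x : Fin n → ℝ | ∀ i, |x i| ≤ τ / K}) := by
  set c : Fin n → ℝ := fun i => max (-t) (min (x i) t)
  have hKt : K * t ≤ τ := by
    linarith [sum_nonneg fun i (_ : i ∈ univ) => le_max_right (|x i| - t) 0]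
  set a := (τ - K * t) / τ
  set b := K * t / τ
  have ha : 0 ≤ a := div_nonneg (by linarith) hτ.le
  have hb : 0 ≤ b := by positivity
  obtain ⟨p, hp, hps⟩ := Set.mem_smul_set.1 <| mem_smul_setOf_sum_abs_le (x := x - c) ha hτ.le
    (by simpa [a, div_mul_cancel₀ _ hτ.ne', c, abs_sub_max_neg_min ht]
      using le_sub_iff_add_le'.2 hx)
  obtain ⟨q, hq, hqc⟩ := Set.mem_smul_set.1 <|
    mem_smul_setOf_forall_abs_le (x := c) (r := τ / K) hb (by positivity) fun i => by
      simpa [b, div_mul_div_cancel₀', field] using abs_max_neg_min_le ht (x i)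
  have hdecomp : x = a • p + b • q := by
    rw [hps, hqc, sub_add_cancel]
  rw [hdecomp]
  exact convex_convexHull ℝ _ (subset_convexHull ℝ _ (Set.mem_union_left _ hp))
    (subset_convexHull ℝ _ (Set.mem_union_right _ hq)) ha hb
    (by rw [← add_div, sub_add_cancel, div_self hτ.ne'])

/-- The K-norm ball of radius τ, {x : kNorm x ≤ τ}, equals the convex hull of the
union of the L1-ball B_1(τ) and the hypercube B_∞(τ/K). -/
theorem kNorm_ball_eq_convexHull {n K : ℕ} (hK1 : 1 ≤ K) (hKn : K ≤ n)
    (τ : ℝ) (hτ : 0 < τ) :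
    {x : Fin n → ℝ | kNorm n K x ≤ τ} =
      convexHull ℝ ({x : Fin n → ℝ | (∑ i, |x i|) ≤ τ} ∪
        {x : Fin n → ℝ | ∀ i, |x i| ≤ τ / K}) := by
  refine subset_antisymm (fun x hx => ?_) (convexHull_min (Set.union_subset ?_ ?_)
    (convex_setOf_kNorm_le hKn τ))
  · obtain ⟨t, ht, hkt⟩ := exists_threshold_le_kNorm hK1 hKn x
    exact mem_convexHull_union_of_threshold hK1 hτ ht (hkt.trans hx)
  · exact fun x hx => (kNorm_le_iff hKn x τ).2 fun S _ =>
      (sum_le_sum_of_subset_of_nonneg (subset_univ S) fun i _ _ => abs_nonneg _).trans hx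
  · refine fun x hx => (kNorm_le_iff hKn x τ).2 fun S hS => ?_
    calc ∑ i ∈ S, |x i| ≤ S.card • (τ / K) := sum_le_card_nsmul _ _ _ fun i _ => hx i
      _ = τ := by rw [hS, nsmul_eq_mul]; field_simp
end

section
/- The L2-diameter of the K-norm ball of radius τ in R^n equals max(2τ, 2τ√n/K). -/
/-!
The Euclidean norm is at most the L1 norm on `B_1(r)` and at most `s √n` on `B_∞(s)`, and
the Euclidean ball of radius `max r (s √n)` is convex, so it contains the whole hull; by the
triangle inequality no two points of the hull are farther apart than `2 max r (s √n)`.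
The bound is attained by the antipodal pairs `± r e_i` and `± (s, …, s)`.
-/

open Finset

variable {ι : Type*} [Fintype ι]

lemma norm_toLp_two (x : ι → ℝ) : ‖WithLp.toLp 2 x‖ = √(∑ i, x i ^ 2) := by
  simp [EuclideanSpace.norm_eq, sq_abs]

lemma sqrt_sum_sq_sub_le (x y : ι → ℝ) :
    √(∑ i, (x i - y i) ^ 2) ≤ √(∑ i, x i ^ 2) + √(∑ i, y i ^ 2) := by
  have := norm_sub_le (WithLp.toLp 2 x) (WithLp.toLp 2 y)
  rwa [← WithLp.toLp_sub, norm_toLp_two, norm_toLp_two, norm_toLp_two] at this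

lemma sqrt_sum_sq_sub_neg (x : ι → ℝ) :
    √(∑ i, (x i - (-x) i) ^ 2) = 2 * √(∑ i, x i ^ 2) := by
  have h : ∑ i, (x i - (-x) i) ^ 2 = 2 ^ 2 * ∑ i, x i ^ 2 := by
    rw [mul_sum]; exact sum_congr rfl fun i _ => by simp only [Pi.neg_apply]; ring
  rw [h, Real.sqrt_mul (by norm_num), Real.sqrt_sq (by norm_num)]

lemma convex_setOf_sqrt_sum_sq_le (R : ℝ) :
    Convex ℝ {x : ι → ℝ | √(∑ i, x i ^ 2) ≤ R} := by
  have h : {x : ι → ℝ | √(∑ i, x i ^ 2) ≤ R} =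
      (WithLp.linearEquiv 2 ℝ (ι → ℝ)).symm.toLinearMap ⁻¹' Metric.closedBall 0 R := by
    ext x
    simp [← norm_toLp_two]
  rw [h]
  exact (convex_closedBall _ _).linear_preimage _

lemma sqrt_sum_sq_le_sum_abs (x : ι → ℝ) : √(∑ i, x i ^ 2) ≤ ∑ i, |x i| := by
  rw [Real.sqrt_le_left (sum_nonneg fun i _ => abs_nonneg (x i))]
  simpa only [sq_abs] using sum_sq_le_sq_sum_of_nonneg (s := univ) fun i _ => abs_nonneg (x i)

lemma sqrt_sum_sq_const (s : ℝ) :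
    √(∑ _i : ι, s ^ 2) = |s| * √(Fintype.card ι) := by
  rw [sum_const, card_univ, nsmul_eq_mul, Real.sqrt_mul (Nat.cast_nonneg _), Real.sqrt_sq_eq_abs,
    mul_comm]

lemma sqrt_sum_sq_le_of_forall_abs_le {x : ι → ℝ} {s : ℝ} (hs : 0 ≤ s) (h : ∀ i, |x i| ≤ s) :
    √(∑ i, x i ^ 2) ≤ s * √(Fintype.card ι) := by
  calc √(∑ i, x i ^ 2) ≤ √(∑ _i : ι, s ^ 2) :=
        Real.sqrt_le_sqrt <| sum_le_sum fun i _ => sq_le_sq' (abs_le.1 (h i)).1 (abs_le.1 (h i)).2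
    _ = s * √(Fintype.card ι) := by rw [sqrt_sum_sq_const, abs_of_nonneg hs]

lemma sqrt_sum_sq_single [DecidableEq ι] (i : ι) (r : ℝ) :
    √(∑ j, Pi.single (M := fun _ => ℝ) i r j ^ 2) = |r| := by
  rw [sum_eq_single i (fun j _ hj => by simp [hj]) (by simp), Pi.single_eq_same,
    Real.sqrt_sq_eq_abs]

def euclideanDists (A : Set (ι → ℝ)) : Set ℝ :=
  {d | ∃ x ∈ A, ∃ y ∈ A, d = √(∑ i, (x i - y i) ^ 2)}

def l1LinftyHull (r s : ℝ) : Set (ι → ℝ) :=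
  convexHull ℝ ({x | ∑ i, |x i| ≤ r} ∪ {x | ∀ i, |x i| ≤ s})

variable {r s : ℝ}

lemma sqrt_sum_sq_le_of_mem_l1LinftyHull (hs : 0 ≤ s) {x : ι → ℝ} (hx : x ∈ l1LinftyHull r s) :
    √(∑ i, x i ^ 2) ≤ max r (s * √(Fintype.card ι)) := by
  refine convexHull_min ?_ (convex_setOf_sqrt_sum_sq_le _) hx
  rintro y (hy | hy)
  · exact le_max_of_le_left ((sqrt_sum_sq_le_sum_abs y).trans hy)
  · exact le_max_of_le_right (sqrt_sum_sq_le_of_forall_abs_le hs hy)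

lemma two_mul_mem_euclideanDists {A : Set (ι → ℝ)} {x : ι → ℝ} (hx : x ∈ A) (hnx : -x ∈ A) :
    2 * √(∑ i, x i ^ 2) ∈ euclideanDists A :=
  ⟨x, hx, -x, hnx, (sqrt_sum_sq_sub_neg x).symm⟩

theorem isGreatest_euclideanDists_l1LinftyHull [Nonempty ι] (hr : 0 ≤ r) (hs : 0 ≤ s) :
    IsGreatest (euclideanDists (l1LinftyHull r s : Set (ι → ℝ)))
      (2 * max r (s * √(Fintype.card ι))) := by
  classical
  refine ⟨?_, ?_⟩
  · rcases le_total (s * √(Fintype.card ι)) r with h | h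
    · rw [max_eq_left h]
      obtain ⟨i⟩ := ‹Nonempty ι›
      have hmem (a : ℝ) (ha : |a| = r) : Pi.single i a ∈ l1LinftyHull r s := by
        refine subset_convexHull ℝ _ (Or.inl (le_of_eq (α := ℝ) ?_))
        rw [sum_eq_single i (fun j _ hj => by simp [hj]) (by simp), Pi.single_eq_same, ha]
      have := two_mul_mem_euclideanDists (hmem r (abs_of_nonneg hr))
        (Pi.single_neg (f := fun _ => ℝ) i r ▸ hmem (-r) (by rw [abs_neg, abs_of_nonneg hr]))
      rwa [sqrt_sum_sq_single, abs_of_nonneg hr] at this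
    · rw [max_eq_right h]
      have hmem (a : ℝ) (ha : |a| = s) : (fun _ => a : ι → ℝ) ∈ l1LinftyHull r s :=
        subset_convexHull ℝ _ (Or.inr fun _ => ha.le)
      have := two_mul_mem_euclideanDists (hmem s (abs_of_nonneg hs))
        (hmem (-s) (by rw [abs_neg, abs_of_nonneg hs]))
      rwa [sqrt_sum_sq_const, abs_of_nonneg hs] at this
  · rintro d ⟨x, hx, y, hy, rfl⟩
    linarith [sqrt_sum_sq_sub_le x y, sqrt_sum_sq_le_of_mem_l1LinftyHull hs hx,
      sqrt_sum_sq_le_of_mem_l1LinftyHull hs hy]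

theorem kNorm_ball_diameter_general {n K : ℕ} (hn : 1 ≤ n)
    (τ : ℝ) (hτ : 0 < τ) :
    IsGreatest {d : ℝ | ∃ x ∈ convexHull ℝ ({x : Fin n → ℝ | (∑ i, |x i|) ≤ τ} ∪
          {x : Fin n → ℝ | ∀ i, |x i| ≤ τ / K}),
        ∃ y ∈ convexHull ℝ ({x : Fin n → ℝ | (∑ i, |x i|) ≤ τ} ∪
          {x : Fin n → ℝ | ∀ i, |x i| ≤ τ / K}),
        d = Real.sqrt (∑ i, (x i - y i) ^ 2)}
      (max (2 * τ) (2 * τ * Real.sqrt n / K)) := by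
  have : Nonempty (Fin n) := ⟨⟨0, hn⟩⟩
  have hmax : max (2 * τ) (2 * τ * Real.sqrt n / K) =
      2 * max τ (τ / K * √(Fintype.card (Fin n))) := by
    rw [mul_max_of_nonneg _ _ zero_le_two, Fintype.card_fin]
    ring_nf
  rw [hmax]
  exact isGreatest_euclideanDists_l1LinftyHull hτ.le (by positivity)

/-- The L2-diameter of the K-norm ball of radius τ in R^n, i.e. of
conv(B_1(τ) ∪ B_∞(τ/K)), equals max(2τ, 2τ√n/K). -/
theorem kNorm_ball_diameter {n K : ℕ} (hn : 1 ≤ n) (hK1 : 1 ≤ K) (hKn : K ≤ n)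
    (τ : ℝ) (hτ : 0 < τ) :
    IsGreatest {d : ℝ | ∃ x ∈ convexHull ℝ ({x : Fin n → ℝ | (∑ i, |x i|) ≤ τ} ∪
          {x : Fin n → ℝ | ∀ i, |x i| ≤ τ / K}),
        ∃ y ∈ convexHull ℝ ({x : Fin n → ℝ | (∑ i, |x i|) ≤ τ} ∪
          {x : Fin n → ℝ | ∀ i, |x i| ≤ τ / K}),
        d = Real.sqrt (∑ i, (x i - y i) ^ 2)}
      (max (2 * τ) (2 * τ * Real.sqrt n / K)) :=
  kNorm_ball_diameter_general hn τ hτ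
end

section
/- For any x ∈ R^n, a minimizer of ⟨v, x⟩ over the K-norm ball of radius τ is achieved at whichever of the two points — the L1-ball-of-radius-τ LMO output or the hypercube-of-radius-τ/K LMO output — gives the smaller inner product with x; equivalently min over the K-norm ball equals min(−τ‖x‖_∞, −(τ/K)‖x‖_1). -/
/-!
The superlevel sets of a linear functional are convex, so its minimum over the convex hull of
`A ∪ B` is the smaller of its minima over `A` and over `B`. By Hölder, `⟨v, x⟩ ≥ -r ‖x‖_∞` on the
`ℓ¹` ball of radius `r`, with equality at `-r sign(x_j) e_j` for `j` maximizing `|x_j|`; and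
`⟨v, x⟩ ≥ -s ‖x‖_1` on the cube of radius `s`, with equality at `-s sign(x)`.
-/

open Finset

theorem abs_sign_le_one {α : Type*} [Ring α] [LinearOrder α] [IsStrictOrderedRing α] (a : α) :
    |(SignType.sign a : α)| ≤ 1 := by
  rcases SignType.sign a with _ | _ | _ <;> simp

theorem isLeast_image_convexHull_union {𝕜 E : Type*} [Field 𝕜] [LinearOrder 𝕜]
    [IsStrictOrderedRing 𝕜] [AddCommGroup E] [Module 𝕜 E] (f : E →ₗ[𝕜] 𝕜) {A B : Set E} {a b : 𝕜}
    (ha : IsLeast (f '' A) a) (hb : IsLeast (f '' B) b) :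
    IsLeast (f '' convexHull 𝕜 (A ∪ B)) (min a b) := by
  refine ⟨?_, ?_⟩
  · rcases min_choice a b with h | h <;> rw [h]
    · exact Set.image_mono (Set.subset_union_left.trans (subset_convexHull 𝕜 _)) ha.1
    · exact Set.image_mono (Set.subset_union_right.trans (subset_convexHull 𝕜 _)) hb.1
  · rintro _ ⟨v, hv, rfl⟩
    have hAB : A ∪ B ⊆ {w | min a b ≤ f w} := by
      rintro w (hw | hw)
      · exact (min_le_left a b).trans (ha.2 ⟨w, hw, rfl⟩)
      · exact (min_le_right a b).trans (hb.2 ⟨w, hw, rfl⟩)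
    exact convexHull_min hAB (convex_halfSpace_ge f.isLinear _) hv

section DotProduct

variable {ι : Type*} [Fintype ι]

theorem abs_dotProduct_le_sum_abs_mul (v x : ι → ℝ) : |v ⬝ᵥ x| ≤ ∑ i, |v i| * |x i| :=
  (abs_sum_le_sum_abs _ _).trans_eq (by simp only [abs_mul])

theorem sum_abs_single [DecidableEq ι] (j : ι) (c : ℝ) : ∑ i, |Pi.single j c i| = |c| := by
  simp only [Pi.apply_single (fun _ => abs) (fun _ => abs_zero), Fintype.sum_pi_single']

theorem isLeast_dotProduct_l1Ball {r : ℝ} (hr : 0 ≤ r) (x : ι → ℝ) :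
    IsLeast ((· ⬝ᵥ x) '' {v | ∑ i, |v i| ≤ r}) (-r * ⨆ i, |x i|) := by
  classical
  refine ⟨?_, ?_⟩
  · rcases isEmpty_or_nonempty ι with hι | hι
    · exact ⟨0, by simp [hr], by simp⟩
    obtain ⟨j, hj⟩ := exists_eq_ciSup_of_finite (f := fun i => |x i|)
    refine ⟨Pi.single j (-r * SignType.sign (x j)), ?_, ?_⟩
    · rw [Set.mem_ofPred_eq, sum_abs_single, abs_mul, abs_neg, abs_of_nonneg hr]
      exact mul_le_of_le_one_right hr (abs_sign_le_one (x j))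
    · simp [mul_assoc, sign_mul_self, ← hj]
  · rintro _ ⟨v, hv, rfl⟩
    have hle_iSup : ∀ i, |x i| ≤ ⨆ i, |x i| := le_ciSup (Set.finite_range _).bddAbove
    have hiSup_nonneg : 0 ≤ ⨆ i, |x i| := Real.iSup_nonneg fun i => abs_nonneg (x i)
    rw [neg_mul]
    refine neg_le_of_abs_le ?_
    calc |v ⬝ᵥ x| ≤ ∑ i, |v i| * |x i| := abs_dotProduct_le_sum_abs_mul v x
      _ ≤ ∑ i, |v i| * ⨆ i, |x i| := by gcongr with i; exact hle_iSup i
      _ = (∑ i, |v i|) * ⨆ i, |x i| := (sum_mul ..).symm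
      _ ≤ r * ⨆ i, |x i| := by gcongr; exact hv

theorem isLeast_dotProduct_cube {s : ℝ} (hs : 0 ≤ s) (x : ι → ℝ) :
    IsLeast ((· ⬝ᵥ x) '' {v | ∀ i, |v i| ≤ s}) (-s * ∑ i, |x i|) := by
  refine ⟨⟨fun i => -s * SignType.sign (x i), fun i => ?_, ?_⟩, ?_⟩
  · simpa [abs_mul, abs_of_nonneg hs] using mul_le_of_le_one_right hs (abs_sign_le_one (x i))
  · simp only [dotProduct, mul_assoc, sign_mul_self, mul_sum]
  · rintro _ ⟨v, hv, rfl⟩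
    rw [neg_mul]
    refine neg_le_of_abs_le ?_
    calc |v ⬝ᵥ x| ≤ ∑ i, |v i| * |x i| := abs_dotProduct_le_sum_abs_mul v x
      _ ≤ ∑ i, s * |x i| := by gcongr with i; exact hv i
      _ = s * ∑ i, |x i| := (mul_sum ..).symm

end DotProduct

theorem kNorm_ball_lmo_general {n K : ℕ}
    (τ : ℝ) (hτ : 0 < τ) (x : Fin n → ℝ) :
    IsLeast {s : ℝ | ∃ v ∈ convexHull ℝ ({v : Fin n → ℝ | (∑ i, |v i|) ≤ τ} ∪
          {v : Fin n → ℝ | ∀ i, |v i| ≤ τ / K}),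
        s = ∑ i, v i * x i}
      (min (-τ * ⨆ i, |x i|) (-(τ / K) * ∑ i, |x i|)) := by
  have hmin := isLeast_image_convexHull_union ((dotProductBilin ℝ ℝ).flip x)
    (isLeast_dotProduct_l1Ball hτ.le x) (isLeast_dotProduct_cube (s := τ / K) (by positivity) x)
  simp only [Set.image, eq_comm] at hmin
  exact hmin

/-- For any x ∈ R^n, the minimum of ⟨v, x⟩ over the K-norm ball of radius τ,
conv(B_1(τ) ∪ B_∞(τ/K)), equals min(−τ‖x‖_∞, −(τ/K)‖x‖_1), i.e. it is attained at the
better of the L1-ball-of-radius-τ LMO output and the hypercube-of-radius-τ/K LMO output. -/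
theorem kNorm_ball_lmo {n K : ℕ} (hK1 : 1 ≤ K) (hKn : K ≤ n)
    (τ : ℝ) (hτ : 0 < τ) (x : Fin n → ℝ) :
    IsLeast {s : ℝ | ∃ v ∈ convexHull ℝ ({v : Fin n → ℝ | (∑ i, |v i|) ≤ τ} ∪
          {v : Fin n → ℝ | ∀ i, |v i| ≤ τ / K}),
        s = ∑ i, v i * x i}
      (min (-τ * ⨆ i, |x i|) (-(τ / K) * ∑ i, |x i|)) :=
  kNorm_ball_lmo_general τ hτ x
end
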